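/- For the congruence quotients Γ_k of the first Grigorchuk group (image of Γ in Aut(T(k))), one has |Γ_k| = 2^{5·2^{k-3}+2} for all k ≥ 3. -/

import Mathlib

/-- The generator `a`: flip the first letter. -/
def aFun : List Bool → List Bool
  | [] => []
  | x :: xs => (!x) :: xs

mutual
/-- The generator `b` of the first Grigorchuk group, `b = (a, c)`. -/
def bFun : List Bool → List Bool
  | [] => []
  | false :: xs => false :: aFun xs
  | true :: xs => true :: cFun xs
/-- The generator `c` of the first Grigorchuk group, `c = (a, d)`. -/
def cFun : List Bool → List Bool
  | [] => []
  | false :: xs => false :: aFun xs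
  | true :: xs => true :: dFun xs
/-- The generator `d` of the first Grigorchuk group, `d = (1, b)`. -/
def dFun : List Bool → List Bool
  | [] => []
  | false :: xs => false :: xs
  | true :: xs => true :: bFun xs
end

theorem aFun_inv : Function.Involutive aFun := by
  intro l; cases l <;> simp [aFun]

theorem bcd_inv : ∀ l : List Bool, bFun (bFun l) = l ∧ cFun (cFun l) = l ∧ dFun (dFun l) = l := by
  intro l
  induction l with
  | nil => simp [bFun, cFun, dFun]
  | cons x xs ih =>
    cases x <;> simp [bFun, cFun, dFun, aFun_inv xs, ih.1, ih.2.1, ih.2.2]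

/-- The automorphism `a` of the rooted binary tree. -/
def aP : Equiv.Perm (List Bool) := Function.Involutive.toPerm aFun aFun_inv
/-- The automorphism `b` of the rooted binary tree. -/
def bP : Equiv.Perm (List Bool) := Function.Involutive.toPerm bFun (fun l => (bcd_inv l).1)
/-- The automorphism `c` of the rooted binary tree. -/
def cP : Equiv.Perm (List Bool) := Function.Involutive.toPerm cFun (fun l => (bcd_inv l).2.1)
/-- The automorphism `d` of the rooted binary tree. -/
def dP : Equiv.Perm (List Bool) := Function.Involutive.toPerm dFun (fun l => (bcd_inv l).2.2)

/-- The first Grigorchuk group `Γ = ⟨a, b, c, d⟩ ≤ Aut(T)`. -/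
def Grigorchuk : Subgroup (Equiv.Perm (List Bool)) :=
  Subgroup.closure {aP, bP, cP, dP}

/-!
The level stabilizer `St(1)` has index `2` in `Γ`, and the wreath recursion
`ψ : St(1) → Γ × Γ` identifies `St(k + 1)` with `ψ⁻¹ (St(k) × St(k))`. With `L = ψ(St(1))`,
index bookkeeping gives `[Γ : St(k+1)] · [Γ² : L ⊔ St(k)²] = 2 [Γ : St(k)]²`.

For `k ≤ 2` the element `d` acts trivially on level `k`, which forces `L ⊔ St(k)² = Γ²`; hence
`|Γ₁| = 2`, `|Γ₂| = 8`, `|Γ₃| = 128`. For `k ≥ 3` let `B = ⟨b⟩^Γ`. The quotient `Γ / B` is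
generated by the involutions `a` and `d`, and it is dihedral of order `8` because
`(ad)² = (b, b) ∉ B`: the twisted sign `g ↦ sgn₁(g₀) sgn₂(g₁)` on `St(1)` (signs of the
permutations induced on levels one and two) is trivial on `B` and on `St(3)` but equals `-1` on
`(b, b)`. The same argument applied to `B ⊔ St(k)` gives `St(k) ≤ B`. Finally `B × B ≤ L` and
`L / (B × B)` is the graph of the automorphism of `Γ / B` exchanging `a` and `d`, so
`[Γ² : L] = 8` and `|Γ_{k+1}| = |Γ_k|² / 4`.
-/

namespace Subgroup

variable {G H : Type*} [Group G] [Group H] {x y : G}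

theorem exists_zpowers_of_mem_closure_pair (hx : x ^ 2 = 1) (hy : y ^ 2 = 1) {g : G}
    (hg : g ∈ closure {x, y}) : ∃ r ∈ zpowers (x * y), g = r ∨ g = x * r := by
  rw [sq] at hx hy
  have step : ∀ t ∈ ({x, y} : Set G), ∀ g : G, (∃ r ∈ zpowers (x * y), g = r ∨ g = x * r) →
      ∃ r ∈ zpowers (x * y), t * g = r ∨ t * g = x * r := by
    rintro t (ht | ht) g ⟨r, hr, hg | hg⟩ <;> rw [ht, hg]
    · exact ⟨r, hr, .inr rfl⟩
    · exact ⟨r, hr, .inl (by rw [← mul_assoc, hx, one_mul])⟩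
    · exact ⟨x * y * r, mul_mem (mem_zpowers _) hr,
        .inr (by rw [← mul_assoc, ← mul_assoc, hx, one_mul])⟩
    · refine ⟨(x * y)⁻¹ * r, mul_mem (inv_mem (mem_zpowers _)) hr, .inl ?_⟩
      rw [mul_inv_rev, inv_eq_of_mul_eq_one_right hx, inv_eq_of_mul_eq_one_right hy, mul_assoc]
  induction hg using closure_induction_left with
  | one => exact ⟨1, one_mem _, .inl rfl⟩
  | mul_left t ht g _ ih => exact step t ht g ih
  | inv_mul_cancel t ht g _ ih =>
    have : t⁻¹ = t := by
      rcases ht with ht | ht <;> rw [ht]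
      exacts [inv_eq_of_mul_eq_one_right hx, inv_eq_of_mul_eq_one_right hy]
    rw [this]
    exact step t ht g ih

def closurePairCover (x y : G) : Bool × zpowers (x * y) → closure {x, y} := fun p =>
  ⟨(bif p.1 then x else 1) * p.2,
    mul_mem (by cases p.1; exacts [one_mem _, subset_closure (by simp)])
      (zpowers_le.mpr (mul_mem (subset_closure (by simp)) (subset_closure (by simp))) p.2.2)⟩

theorem closurePairCover_surjective (hx : x ^ 2 = 1) (hy : y ^ 2 = 1) :
    Function.Surjective (closurePairCover x y) := by
  rintro ⟨g, hg⟩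
  obtain ⟨r, hr, hgr | hgr⟩ := exists_zpowers_of_mem_closure_pair hx hy hg
  · exact ⟨(false, ⟨r, hr⟩), Subtype.ext ((one_mul r).trans hgr.symm)⟩
  · exact ⟨(true, ⟨r, hr⟩), Subtype.ext hgr.symm⟩

theorem card_closure_pair_le (hx : x ^ 2 = 1) (hy : y ^ 2 = 1) (hxy : (x * y) ^ 4 = 1) :
    Nat.card (closure {x, y}) ≤ 8 := by
  have : Finite (zpowers (x * y)) :=
    (isOfFinOrder_iff_pow_eq_one.mpr ⟨4, by norm_num, hxy⟩).finite_zpowers.to_subtype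
  calc Nat.card (closure {x, y}) ≤ Nat.card (Bool × zpowers (x * y)) :=
        Nat.card_le_card_of_surjective _ (closurePairCover_surjective hx hy)
    _ = 2 * orderOf (x * y) := by
        rw [Nat.card_prod, Nat.card_zpowers, Nat.card_eq_fintype_card, Fintype.card_bool]
    _ ≤ 2 * 4 := Nat.mul_le_mul_left 2 (orderOf_le_of_pow_eq_one (by norm_num) hxy)

theorem card_closure_pair_eq (hx : x ^ 2 = 1) (hy : y ^ 2 = 1) (hxy : (x * y) ^ 4 = 1)
    (hxy' : (x * y) ^ 2 ≠ 1) : Nat.card (closure {x, y}) = 8 := by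
  have horder : orderOf (x * y) = 2 ^ 2 := orderOf_eq_prime_pow (p := 2) (n := 1) hxy' hxy
  -- otherwise `x` commutes with `x * y`, hence with `y`
  have hx_not_mem : x ∉ zpowers (x * y) := fun hmem => hxy' <| by
    obtain ⟨n, hn⟩ := mem_zpowers_iff.mp hmem
    have hcomm := (Commute.zpow_self (x * y) n).eq
    rw [hn] at hcomm
    rw [sq] at hx hy ⊢
    rw [← mul_assoc, hx, one_mul] at hcomm
    rw [← mul_assoc, ← hcomm, hy]
  have hinj : Function.Injective (closurePairCover x y) := by
    rintro ⟨j, r⟩ ⟨j', r'⟩ h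
    have h' : (bif j then x else 1) * r = (bif j' then x else 1) * r' := congrArg Subtype.val h
    cases j <;> cases j' <;> simp only [cond_true, cond_false, one_mul, mul_right_inj] at h'
    · exact Prod.ext rfl (Subtype.ext h')
    · have hmem := mul_mem r.2 (inv_mem r'.2)
      rw [h', mul_inv_cancel_right] at hmem
      exact absurd hmem hx_not_mem
    · have hmem := mul_mem r'.2 (inv_mem r.2)
      rw [← h', mul_inv_cancel_right] at hmem
      exact absurd hmem hx_not_mem
    · exact Prod.ext rfl (Subtype.ext h')
  have : Finite (zpowers (x * y)) :=
    (isOfFinOrder_iff_pow_eq_one.mpr ⟨4, by norm_num, hxy⟩).finite_zpowers.to_subtype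
  rw [← Nat.card_congr (Equiv.ofBijective _ ⟨hinj, closurePairCover_surjective hx hy⟩),
    Nat.card_prod, Nat.card_zpowers, horder, Nat.card_eq_fintype_card, Fintype.card_bool]
  rfl

theorem normal_comap_inl_of_map_fst_eq_top {L : Subgroup (G × H)}
    (hL : L.map (MonoidHom.fst G H) = ⊤) : (L.comap (MonoidHom.inl G H)).Normal where
  conj_mem u hu g := by
    obtain ⟨p, hp, rfl⟩ := hL ▸ mem_top g
    rw [mem_comap]
    convert mul_mem (mul_mem hp hu) (inv_mem hp) using 1
    ext <;> simp

theorem normal_comap_inr_of_map_snd_eq_top {L : Subgroup (G × H)}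
    (hL : L.map (MonoidHom.snd G H) = ⊤) : (L.comap (MonoidHom.inr G H)).Normal where
  conj_mem u hu g := by
    obtain ⟨p, hp, rfl⟩ := hL ▸ mem_top g
    rw [mem_comap]
    convert mul_mem (mul_mem hp hu) (inv_mem hp) using 1
    ext <;> simp

end Subgroup

open Equiv (Perm)

namespace Grigorchuk

local notation "T" => List Bool
local notation "Γ" => Grigorchuk

/-! ### Wreath recursion -/

/-- The tree map written `(p.1, p.2) a ^ y` in wreath-recursion notation. -/
def wreath (y : Bool) (p : Perm T × Perm T) : T → T
  | [] => []
  | x :: l => (x ^^ y) :: (bif x then p.2 else p.1) l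

theorem wreath_comp (y y' : Bool) (p q : Perm T × Perm T) :
    wreath y p ∘ wreath y' q = wreath (y ^^ y') ((bif y' then p.swap else p) * q) := by
  funext l
  rcases l with _ | ⟨_ | _, l⟩ <;> cases y' <;> simp [wreath]

theorem wreath_comp_false (p q : Perm T × Perm T) :
    wreath false p ∘ wreath false q = wreath false (p * q) :=
  wreath_comp false false p q

theorem wreath_one : wreath false 1 = id := by
  funext l
  rcases l with _ | ⟨_ | _, l⟩ <;> rfl

theorem wreath_injective {y y' : Bool} {p p' : Perm T × Perm T}
    (h : wreath y p = wreath y' p') : y = y' ∧ p = p' := by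
  have h0 (l) := congrFun h (false :: l)
  have h1 (l) := congrFun h (true :: l)
  simp only [wreath, cond_false, cond_true, Bool.false_xor, Bool.true_xor, List.cons.injEq,
    Bool.not_inj_iff] at h0 h1
  exact ⟨(h0 []).1, Prod.ext (Equiv.ext fun l => (h0 l).2) (Equiv.ext fun l => (h1 l).2)⟩

theorem coe_aP : ⇑aP = wreath true 1 := by
  funext l; rcases l with _ | ⟨_ | _, l⟩ <;> rfl

theorem coe_bP : ⇑bP = wreath false (aP, cP) := by
  funext l; rcases l with _ | ⟨_ | _, l⟩ <;> rfl

theorem coe_cP : ⇑cP = wreath false (aP, dP) := by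
  funext l; rcases l with _ | ⟨_ | _, l⟩ <;> rfl

theorem coe_dP : ⇑dP = wreath false (1, bP) := by
  funext l; rcases l with _ | ⟨_ | _, l⟩ <;> rfl

theorem exists_eq_wreath_of_mem {E : Subgroup (Perm T × Perm T)} (hE : ∀ p ∈ E, p.swap ∈ E)
    (hb : (aP, cP) ∈ E) (hc : (aP, dP) ∈ E) (hd : (1, bP) ∈ E) {g : Perm T} (hg : g ∈ Γ) :
    ∃ y, ∃ p ∈ E, ⇑g = wreath y p := by
  have gen : ∀ t ∈ ({aP, bP, cP, dP} : Set (Perm T)), ∃ y, ∃ p ∈ E, ⇑t = wreath y p := by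
    rintro t (rfl | rfl | rfl | rfl)
    exacts [⟨true, 1, one_mem E, coe_aP⟩, ⟨false, _, hb, coe_bP⟩, ⟨false, _, hc, coe_cP⟩,
      ⟨false, _, hd, coe_dP⟩]
  have step : ∀ t ∈ ({aP, bP, cP, dP} : Set (Perm T)), ∀ g : Perm T,
      (∃ y, ∃ p ∈ E, ⇑g = wreath y p) → ∃ y, ∃ p ∈ E, ⇑(t * g) = wreath y p := by
    rintro t ht g ⟨y', q, hq, hg⟩
    obtain ⟨y, p, hp, ht⟩ := gen t ht
    refine ⟨y ^^ y', _, mul_mem ?_ hq, by rw [Perm.coe_mul, ht, hg, wreath_comp]⟩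
    cases y' <;> simp [hp, hE p hp]
  induction hg using Subgroup.closure_induction_left with
  | one => exact ⟨false, 1, one_mem E, wreath_one.symm⟩
  | mul_left t ht g _ ih => exact step t ht g ih
  | inv_mul_cancel t ht g _ ih =>
    have : t⁻¹ = t := by
      rcases ht with rfl | rfl | rfl | rfl <;> ext l <;>
        simp [Perm.inv_def, Function.Involutive.toPerm, aP, bP, cP, dP]
    exact this ▸ step t ht g ih

def coePair : Γ × Γ →* Perm T × Perm T := (Subgroup.subtype Γ).prodMap (Subgroup.subtype Γ)

theorem coePair_injective : Function.Injective coePair :=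
  Prod.map_injective.mpr ⟨Subtype.val_injective, Subtype.val_injective⟩

theorem exists_eq_wreath (g : Γ) : ∃ y, ∃ q : Γ × Γ, ⇑(g : Perm T) = wreath y (coePair q) := by
  have mem : ∀ t ∈ ({aP, bP, cP, dP} : Set (Perm T)), t ∈ Γ := fun t ht => Subgroup.subset_closure ht
  obtain ⟨y, p, hp, h⟩ := exists_eq_wreath_of_mem (E := Subgroup.prod Γ Γ)
    (fun p hp => Subgroup.mem_prod.mpr ⟨hp.2, hp.1⟩) ⟨mem _ (by simp), mem _ (by simp)⟩
    ⟨mem _ (by simp), mem _ (by simp)⟩ ⟨one_mem _, mem _ (by simp)⟩ g.2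
  exact ⟨y, (⟨p.1, hp.1⟩, ⟨p.2, hp.2⟩), h⟩

theorem eq_of_eq_wreath {f : T → T} {p q : Γ × Γ} (hp : f = wreath false (coePair p))
    (hq : f = wreath false (coePair q)) : p = q :=
  coePair_injective (wreath_injective (hp.symm.trans hq)).2

theorem length_apply (g : Γ) (l : T) : ((g : Perm T) l).length = l.length := by
  induction l generalizing g with
  | nil => obtain ⟨y, q, h⟩ := exists_eq_wreath g; rw [h]; rfl
  | cons x l ih =>
    obtain ⟨y, q, h⟩ := exists_eq_wreath g
    rw [h]
    cases x
    · exact congrArg Nat.succ (ih q.1)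
    · exact congrArg Nat.succ (ih q.2)

theorem apply_nil (g : Γ) : (g : Perm T) [] = [] := by
  obtain ⟨y, q, h⟩ := exists_eq_wreath g
  rw [h]
  rfl

/-! ### Generators and level stabilizers -/

def a : Γ := ⟨aP, Subgroup.subset_closure (by simp)⟩
def b : Γ := ⟨bP, Subgroup.subset_closure (by simp)⟩
def c : Γ := ⟨cP, Subgroup.subset_closure (by simp)⟩
def d : Γ := ⟨dP, Subgroup.subset_closure (by simp)⟩

theorem coe_a : ⇑((a : Γ) : Perm T) = wreath true 1 := coe_aP

theorem closure_generators : Subgroup.closure {a, b, c, d} = (⊤ : Subgroup Γ) := by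
  have h : Subgroup.closure (((↑) : Γ → Perm T) ⁻¹' {aP, bP, cP, dP}) = ⊤ :=
    Subgroup.closure_closure_coe_preimage
  convert h using 2
  ext g
  simp only [Set.mem_insert_iff, Set.mem_singleton_iff, Set.mem_preimage, Subtype.ext_iff]
  rfl

theorem a_sq : a ^ 2 = 1 := Subtype.ext (Equiv.ext aFun_inv)

theorem b_sq : b ^ 2 = 1 := Subtype.ext (Equiv.ext fun l => (bcd_inv l).1)

theorem d_sq : d ^ 2 = 1 := Subtype.ext (Equiv.ext fun l => (bcd_inv l).2.2)

theorem a_inv : a⁻¹ = a := inv_eq_of_mul_eq_one_right (pow_two a ▸ a_sq)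

theorem d_inv : d⁻¹ = d := inv_eq_of_mul_eq_one_right (pow_two d ▸ d_sq)

theorem klein_relations :
    ∀ l, bFun (dFun l) = cFun l ∧ cFun (bFun l) = dFun l ∧ dFun (cFun l) = bFun l
  | [] => ⟨rfl, rfl, rfl⟩
  | false :: l => by simp [bFun, cFun, dFun, aFun_inv l]
  | true :: l => by simp [bFun, cFun, dFun, klein_relations l]

theorem c_eq_mul : c = b * d := Subtype.ext (Equiv.ext fun l => (klein_relations l).1.symm)

theorem coe_ad_sq : ⇑(((a * d) ^ 2 : Γ) : Perm T) = wreath false (coePair (b, b)) := by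
  funext l; rcases l with _ | ⟨_ | _, l⟩ <;> rfl

theorem ad_pow_four : (a * d) ^ 4 = 1 := by
  refine Subtype.ext (DFunLike.coe_injective ?_)
  rw [show 4 = 2 * 2 from rfl, pow_mul, pow_two ((a * d) ^ 2), Subgroup.coe_mul, Perm.coe_mul,
    coe_ad_sq, wreath_comp_false, ← map_mul, ← pow_two, show (b, b) ^ 2 = 1 from
    Prod.ext b_sq b_sq, map_one, wreath_one]
  rfl

def restrictLength (P : ℕ → Prop) : Γ →* Perm {l : T // P l.length} where
  toFun g := (g : Perm T).subtypePerm fun l => by rw [length_apply g]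
  map_one' := rfl
  map_mul' _ _ := rfl

/-- The level stabilizer `St_Γ(k)`; the congruence quotient `Γ_k` is `Γ ⧸ levelStab k`. -/
def levelStab (k : ℕ) : Subgroup Γ := (restrictLength (· ≤ k)).ker

instance (k : ℕ) : (levelStab k).Normal := MonoidHom.normal_ker _

theorem card_range_restrict (k : ℕ) :
    Nat.card (Set.range fun g : Γ => fun l : {l : T // l.length ≤ k} => (g : Perm T) l.1) =
      (levelStab k).index := by
  let F : Perm {l : T // l.length ≤ k} → {l : T // l.length ≤ k} → T := fun σ l => σ l
  have hF : Function.Injective F := fun σ τ h => Equiv.ext fun l => Subtype.ext (congrFun h l)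
  calc _ = Nat.card (F '' Set.range (restrictLength (· ≤ k))) := by rw [← Set.range_comp]; rfl
    _ = Nat.card (restrictLength (· ≤ k)).range := Nat.card_image_of_injective hF _
    _ = (levelStab k).index := (Subgroup.index_ker _).symm

theorem mem_levelStab {k : ℕ} {g : Γ} :
    g ∈ levelStab k ↔ ∀ l : T, l.length ≤ k → (g : Perm T) l = l := by
  simp only [levelStab, MonoidHom.mem_ker, Perm.ext_iff, Subtype.ext_iff, Subtype.forall]
  rfl

theorem levelStab_anti {j k : ℕ} (h : j ≤ k) : levelStab k ≤ levelStab j :=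
  fun _ hg => mem_levelStab.mpr fun l hl => mem_levelStab.mp hg l (hl.trans h)

theorem levelStab_zero : levelStab 0 = ⊤ :=
  eq_top_iff.mpr fun g _ => mem_levelStab.mpr fun l hl => by
    rw [List.eq_nil_of_length_eq_zero (Nat.le_zero.mp hl), apply_nil g]

theorem d_mem_levelStab_two : d ∈ levelStab 2 := by
  refine mem_levelStab.mpr fun l hl => ?_
  match l, hl with
  | [], _ => rfl
  | [x], _ => cases x <;> rfl
  | [x, y], _ => cases x <;> cases y <;> rfl
  | _ :: _ :: _ :: _, h => simp at h

instance (j : ℕ) : Fintype {l : T // l.length = j} := inferInstanceAs (Fintype (List.Vector Bool j))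

def levelSign (j : ℕ) : Γ →* ℤˣ := Perm.sign.comp (restrictLength (· = j))

theorem levelSign_eq_one {j k : ℕ} (hjk : j ≤ k) {g : Γ} (hg : g ∈ levelStab k) :
    levelSign j g = 1 := by
  have : restrictLength (· = j) g = 1 :=
    Equiv.ext fun l => Subtype.ext (mem_levelStab.mp hg l.1 (l.2.le.trans hjk))
  rw [levelSign, MonoidHom.comp_apply, this, map_one]

theorem levelSign_one_a : levelSign 1 a = -1 := by decide
theorem levelSign_one_b : levelSign 1 b = 1 := by decide
theorem levelSign_one_c : levelSign 1 c = 1 := by decide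
theorem levelSign_two_a : levelSign 2 a = 1 := by decide
theorem levelSign_two_b : levelSign 2 b = -1 := by decide
theorem levelSign_two_c : levelSign 2 c = -1 := by decide

/-! ### The stabilizer of the first level and its sections -/

theorem mem_levelStab_one_iff {g : Γ} {y : Bool} {q : Γ × Γ}
    (h : ⇑(g : Perm T) = wreath y (coePair q)) : g ∈ levelStab 1 ↔ y = false := by
  have root (x : Bool) : (g : Perm T) [x] = [x ^^ y] := by
    rw [h]; cases x <;> simp [wreath, coePair, apply_nil]
  rw [mem_levelStab]
  constructor
  · intro H
    simpa [root] using H [false] (by simp)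
  · rintro rfl l hl
    match l, hl with
    | [], _ => exact apply_nil g
    | [x], _ => simp [root]

theorem mul_a_mem_levelStab_one_xor (g : Γ) : Xor (g * a ∈ levelStab 1) (g ∈ levelStab 1) := by
  obtain ⟨y, q, hg⟩ := exists_eq_wreath g
  have hga : ⇑((g * a : Γ) : Perm T) = wreath (!y) (coePair (q.swap * 1)) := by
    rw [Subgroup.coe_mul, Perm.coe_mul, hg, coe_a, wreath_comp]
    simp only [Bool.xor_true, cond_true, mul_one]
    rfl
  rw [mem_levelStab_one_iff hga, mem_levelStab_one_iff hg]
  cases y <;> simp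

theorem index_levelStab_one : (levelStab 1).index = 2 :=
  Subgroup.index_eq_two_iff.mpr ⟨a, mul_a_mem_levelStab_one_xor⟩

theorem exists_sections (g : levelStab 1) :
    ∃ p : Γ × Γ, ⇑((g : Γ) : Perm T) = wreath false (coePair p) := by
  obtain ⟨y, q, h⟩ := exists_eq_wreath (g : Γ)
  obtain rfl := (mem_levelStab_one_iff h).mp g.2
  exact ⟨q, h⟩

/-- The wreath recursion `ψ : St_Γ(1) → Γ × Γ`, `g ↦ (g₀, g₁)`. -/
noncomputable def sections : levelStab 1 →* Γ × Γ where
  toFun g := (exists_sections g).choose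
  map_one' := eq_of_eq_wreath (exists_sections 1).choose_spec (by rw [map_one, wreath_one]; rfl)
  map_mul' g h := eq_of_eq_wreath (exists_sections (g * h)).choose_spec (by
    rw [map_mul, ← wreath_comp_false, ← (exists_sections g).choose_spec,
      ← (exists_sections h).choose_spec]
    rfl)

theorem sections_spec (g : levelStab 1) :
    ⇑((g : Γ) : Perm T) = wreath false (coePair (sections g)) :=
  (exists_sections g).choose_spec

theorem sections_eq {g : levelStab 1} {p : Γ × Γ}
    (h : ⇑((g : Γ) : Perm T) = wreath false (coePair p)) : sections g = p :=
  eq_of_eq_wreath (sections_spec g) h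

theorem mem_levelStab_succ_iff {k : ℕ} (g : levelStab 1) :
    (g : Γ) ∈ levelStab (k + 1) ↔ sections g ∈ (levelStab k).prod (levelStab k) := by
  have key (x : Bool) (l : T) : ((g : Γ) : Perm T) (x :: l) =
      x :: ((bif x then (sections g).2 else (sections g).1 : Γ) : Perm T) l := by
    rw [sections_spec]; cases x <;> rfl
  simp only [Subgroup.mem_prod, mem_levelStab]
  constructor
  · intro H
    refine ⟨fun l hl => ?_, fun l hl => ?_⟩
    · simpa [key] using H (false :: l) (by simpa using hl)
    · simpa [key] using H (true :: l) (by simpa using hl)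
  · rintro ⟨H0, H1⟩ (_ | ⟨_ | _, l⟩) hl
    · exact apply_nil _
    · simp [key, H0 l (by simpa using hl)]
    · simp [key, H1 l (by simpa using hl)]

/-- `[Γ : St(k+1)] = [Γ : St(1)] · [L : L ⊓ St(k)²]` with `L = ψ(St(1))`, and
`[L : L ⊓ St(k)²] = [L ⊔ St(k)² : St(k)²]` by the second isomorphism theorem. -/
theorem index_levelStab_succ_mul (k : ℕ) :
    (levelStab (k + 1)).index * (sections.range ⊔ (levelStab k).prod (levelStab k)).index =
      2 * (levelStab k).index ^ 2 := by
  set M := (levelStab k).prod (levelStab k)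
  have hsub : (levelStab (k + 1)).subgroupOf (levelStab 1) = M.comap sections := by
    ext g
    exact mem_levelStab_succ_iff g
  have hrel : (levelStab (k + 1)).relIndex (levelStab 1) = M.relIndex sections.range := by
    rw [Subgroup.relIndex, hsub, Subgroup.index_comap]
  rw [← Subgroup.relIndex_mul_index (levelStab_anti (Nat.le_add_left 1 k)), hrel,
    index_levelStab_one, ← Subgroup.relIndex_sup_right, mul_comm _ 2, mul_assoc,
    Subgroup.relIndex_mul_index le_sup_right, Subgroup.index_prod, sq]

theorem mem_range_sections {g : Γ} {p : Γ × Γ} (h : ⇑(g : Perm T) = wreath false (coePair p)) :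
    p ∈ sections.range :=
  ⟨⟨g, (mem_levelStab_one_iff h).mpr rfl⟩, sections_eq h⟩

theorem generator_pairs_mem_range_sections :
    ∀ p ∈ ({(a, c), (a, d), (1, b), (c, a), (d, a), (b, 1)} : Set (Γ × Γ)),
      p ∈ sections.range := by
  rintro p (rfl | rfl | rfl | rfl | rfl | rfl)
  · exact mem_range_sections (g := b) (by funext l; rcases l with _ | ⟨_ | _, l⟩ <;> rfl)
  · exact mem_range_sections (g := c) (by funext l; rcases l with _ | ⟨_ | _, l⟩ <;> rfl)
  · exact mem_range_sections (g := d) (by funext l; rcases l with _ | ⟨_ | _, l⟩ <;> rfl)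
  · exact mem_range_sections (g := a * b * a) (by funext l; rcases l with _ | ⟨_ | _, l⟩ <;> rfl)
  · exact mem_range_sections (g := a * c * a) (by funext l; rcases l with _ | ⟨_ | _, l⟩ <;> rfl)
  · exact mem_range_sections (g := a * d * a) (by funext l; rcases l with _ | ⟨_ | _, l⟩ <;> rfl)

theorem map_fst_range_sections : sections.range.map (MonoidHom.fst Γ Γ) = ⊤ := by
  have hL := generator_pairs_mem_range_sections
  rw [eq_top_iff, ← closure_generators, Subgroup.closure_le]
  rintro g (rfl | rfl | rfl | rfl)
  exacts [⟨_, hL (a, c) (by simp), rfl⟩, ⟨_, hL (b, 1) (by simp), rfl⟩,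
    ⟨_, hL (c, a) (by simp), rfl⟩, ⟨_, hL (d, a) (by simp), rfl⟩]

theorem map_snd_range_sections : sections.range.map (MonoidHom.snd Γ Γ) = ⊤ := by
  have hL := generator_pairs_mem_range_sections
  rw [eq_top_iff, ← closure_generators, Subgroup.closure_le]
  rintro g (rfl | rfl | rfl | rfl)
  exacts [⟨_, hL (c, a) (by simp), rfl⟩, ⟨_, hL (1, b) (by simp), rfl⟩,
    ⟨_, hL (a, c) (by simp), rfl⟩, ⟨_, hL (a, d) (by simp), rfl⟩]

theorem sup_prod_levelStab_eq_top {k : ℕ} (hk : k ≤ 2) :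
    sections.range ⊔ (levelStab k).prod (levelStab k) = ⊤ := by
  set J := sections.range ⊔ (levelStab k).prod (levelStab k)
  have hL (p) (hp : p ∈ ({(a, c), (a, d), (1, b), (c, a), (d, a), (b, 1)} : Set (Γ × Γ))) :
      p ∈ J :=
    Subgroup.mem_sup_left (generator_pairs_mem_range_sections p hp)
  have hd : d ∈ levelStab k := levelStab_anti hk d_mem_levelStab_two
  have hd1 : ((d, 1) : Γ × Γ) ∈ J := Subgroup.mem_sup_right ⟨hd, one_mem _⟩
  have hd2 : ((1, d) : Γ × Γ) ∈ J := Subgroup.mem_sup_right ⟨one_mem _, hd⟩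
  have hdd : d * d = 1 := pow_two d ▸ d_sq
  rw [eq_top_iff, ← Subgroup.top_prod_top, Subgroup.prod_le_iff, ← closure_generators,
    MonoidHom.map_closure, MonoidHom.map_closure, Subgroup.closure_le, Subgroup.closure_le]
  constructor
  · rintro _ ⟨g, hg, rfl⟩
    rcases hg with rfl | rfl | rfl | rfl
    · simpa [hdd] using mul_mem (hL (a, d) (by simp)) hd2
    · exact hL (b, 1) (by simp)
    · simpa [c_eq_mul] using mul_mem (hL (b, 1) (by simp)) hd1
    · exact hd1
  · rintro _ ⟨g, hg, rfl⟩
    rcases hg with rfl | rfl | rfl | rfl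
    · simpa [hdd] using mul_mem (hL (d, a) (by simp)) hd1
    · exact hL (1, b) (by simp)
    · simpa [c_eq_mul] using mul_mem (hL (1, b) (by simp)) hd2
    · exact hd2

/-! ### The dihedral quotient `Γ ⧸ B` -/

noncomputable def twistedSign : levelStab 1 →* ℤˣ :=
  ((levelSign 1).coprod (levelSign 2)).comp sections

noncomputable def twistedSignKer : Subgroup Γ := twistedSign.ker.map (levelStab 1).subtype

theorem conj_mem_twistedSignKer {h g : Γ} (hh : h ∈ levelStab 1) {p : Γ × Γ}
    (hg : ⇑(g : Perm T) = wreath false (coePair p)) (hp : levelSign 1 p.1 * levelSign 2 p.2 = 1) :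
    h * g * h⁻¹ ∈ twistedSignKer := by
  have hg1 : g ∈ levelStab 1 := (mem_levelStab_one_iff hg).mpr rfl
  have hg' : twistedSign ⟨g, hg1⟩ = 1 := by
    rw [twistedSign, MonoidHom.comp_apply, sections_eq hg]
    exact hp
  refine Subgroup.mem_map.mpr ⟨⟨h, hh⟩ * ⟨g, hg1⟩ * ⟨h, hh⟩⁻¹, ?_, rfl⟩
  exact (twistedSign.normal_ker).conj_mem _ hg' _

def B : Subgroup Γ := Subgroup.normalClosure {b}

instance : B.Normal := Subgroup.normalClosure_normal

theorem b_mem_B : b ∈ B := Subgroup.subset_normalClosure rfl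

/-- A conjugate of `b` is conjugate, by an element of `St_Γ(1)`, to `b = (a, c)` or to
`aba = (c, a)`; both have trivial twisted sign. -/
theorem B_le_twistedSignKer : B ≤ twistedSignKer := by
  refine (Subgroup.closure_le _).mpr fun x hx => ?_
  obtain ⟨_, rfl, hx⟩ := Group.mem_conjugatesOfSet_iff.mp hx
  obtain ⟨h, rfl⟩ := isConj_iff.mp hx
  rcases mul_a_mem_levelStab_one_xor h with ⟨hha, -⟩ | ⟨hh, -⟩
  · rw [show h * b * h⁻¹ = (h * a) * (a⁻¹ * b * a) * (h * a)⁻¹ by group, a_inv]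
    refine conj_mem_twistedSignKer hha (p := (c, a))
      (by funext l; rcases l with _ | ⟨_ | _, l⟩ <;> rfl) ?_
    rw [levelSign_one_c, levelSign_two_a, mul_one]
  · refine conj_mem_twistedSignKer hh (p := (a, c))
      (by funext l; rcases l with _ | ⟨_ | _, l⟩ <;> rfl) ?_
    rw [levelSign_one_a, levelSign_two_c]
    rfl

theorem levelStab_three_le_twistedSignKer : levelStab 3 ≤ twistedSignKer := by
  intro g hg
  have hg1 : g ∈ levelStab 1 := levelStab_anti (by norm_num) hg
  refine ⟨⟨g, hg1⟩, MonoidHom.mem_ker.mpr ?_, rfl⟩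
  obtain ⟨h0, h1⟩ := Subgroup.mem_prod.mp ((mem_levelStab_succ_iff (k := 2) ⟨g, hg1⟩).mp hg)
  rw [twistedSign, MonoidHom.comp_apply, MonoidHom.coprod_apply,
    levelSign_eq_one (by norm_num) h0, levelSign_eq_one le_rfl h1, mul_one]

theorem ad_sq_not_mem_twistedSignKer : (a * d) ^ 2 ∉ twistedSignKer := by
  rintro ⟨g, hg, hgeq⟩
  have hs : sections g = (b, b) := sections_eq (by
    rw [show ((g : Γ)) = (a * d) ^ 2 from hgeq]
    exact coe_ad_sq)
  rw [SetLike.mem_coe, MonoidHom.mem_ker, twistedSign, MonoidHom.comp_apply, hs,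
    MonoidHom.coprod_apply, levelSign_one_b, levelSign_two_b] at hg
  exact absurd hg (by decide)

theorem mk_c_eq_mk_d {N : Subgroup Γ} [N.Normal] (hb : b ∈ N) : (c : Γ ⧸ N) = d := by
  rw [c_eq_mul, QuotientGroup.mk_mul, (QuotientGroup.eq_one_iff b).mpr hb, one_mul]

theorem mk_pow_eq_one {N : Subgroup Γ} [N.Normal] {g : Γ} {n : ℕ} (h : g ^ n = 1) :
    (g : Γ ⧸ N) ^ n = 1 := by
  rw [← QuotientGroup.mk_pow, h, QuotientGroup.mk_one]

theorem closure_mk_a_d_eq_top {N : Subgroup Γ} [N.Normal] (hb : b ∈ N) :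
    Subgroup.closure {(a : Γ ⧸ N), (d : Γ ⧸ N)} = ⊤ := by
  rw [eq_top_iff, ← Subgroup.map_top_of_surjective _ (QuotientGroup.mk'_surjective N),
    ← closure_generators, MonoidHom.map_closure, Subgroup.closure_le]
  rintro _ ⟨g, hg, rfl⟩
  rcases hg with rfl | rfl | rfl | rfl
  · exact Subgroup.subset_closure (.inl rfl)
  · rw [QuotientGroup.mk'_apply, (QuotientGroup.eq_one_iff b).mpr hb]
    exact one_mem _
  · rw [QuotientGroup.mk'_apply, mk_c_eq_mk_d hb]
    exact Subgroup.subset_closure (.inr rfl)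
  · exact Subgroup.subset_closure (.inr rfl)

theorem index_eq_eight {N : Subgroup Γ} [N.Normal] (hb : b ∈ N) (had : (a * d) ^ 2 ∉ N) :
    N.index = 8 := by
  rw [Subgroup.index_eq_card, ← Subgroup.card_top, ← closure_mk_a_d_eq_top hb]
  refine Subgroup.card_closure_pair_eq (mk_pow_eq_one a_sq) (mk_pow_eq_one d_sq)
    (mk_pow_eq_one ad_pow_four) ?_
  rwa [ne_eq, ← QuotientGroup.mk_mul, ← QuotientGroup.mk_pow, QuotientGroup.eq_one_iff]

theorem index_B : B.index = 8 :=
  index_eq_eight b_mem_B fun h => ad_sq_not_mem_twistedSignKer (B_le_twistedSignKer h)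

theorem levelStab_le_B {k : ℕ} (hk : 3 ≤ k) : levelStab k ≤ B := by
  have hsup : (B ⊔ levelStab k).index = 8 :=
    index_eq_eight (Subgroup.mem_sup_left b_mem_B) fun h => ad_sq_not_mem_twistedSignKer
      (sup_le B_le_twistedSignKer ((levelStab_anti hk).trans levelStab_three_le_twistedSignKer) h)
  have := Subgroup.relIndex_mul_index (le_sup_left : B ≤ B ⊔ levelStab k)
  rw [hsup, index_B, Nat.mul_eq_right (by norm_num)] at this
  exact le_sup_right.trans (Subgroup.relIndex_eq_one.mp this)

/-! ### The image of the wreath recursion -/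

theorem prod_B_le_range_sections : B.prod B ≤ sections.range := by
  have hL := generator_pairs_mem_range_sections
  have := Subgroup.normal_comap_inl_of_map_fst_eq_top map_fst_range_sections
  have := Subgroup.normal_comap_inr_of_map_snd_eq_top map_snd_range_sections
  rw [Subgroup.prod_le_iff, Subgroup.map_le_iff_le_comap, Subgroup.map_le_iff_le_comap]
  exact ⟨Subgroup.normalClosure_le_normal (Set.singleton_subset_iff.mpr (hL (b, 1) (by simp))),
    Subgroup.normalClosure_le_normal (Set.singleton_subset_iff.mpr (hL (1, b) (by simp)))⟩

/-- The graph of the automorphism of `Γ ⧸ B ≅ D₈` exchanging the images of `a` and `d`. -/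
def twistedDiagonal : Subgroup ((Γ ⧸ B) × (Γ ⧸ B)) :=
  Subgroup.closure {((a : Γ ⧸ B), (d : Γ ⧸ B)), ((d : Γ ⧸ B), (a : Γ ⧸ B))}

theorem swap_mem_twistedDiagonal {p : (Γ ⧸ B) × (Γ ⧸ B)} (hp : p ∈ twistedDiagonal) :
    p.swap ∈ twistedDiagonal := by
  have : twistedDiagonal.map (MulEquiv.prodComm : _ ≃* _).toMonoidHom ≤ twistedDiagonal := by
    rw [twistedDiagonal, MonoidHom.map_closure, Subgroup.closure_le]
    rintro _ ⟨q, hq | hq, rfl⟩ <;> rw [hq] <;> apply Subgroup.subset_closure <;> simp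
  exact this ⟨p, hp, rfl⟩

theorem range_sections_eq_comap : sections.range =
    twistedDiagonal.comap ((QuotientGroup.mk' B).prodMap (QuotientGroup.mk' B)) := by
  set π := (QuotientGroup.mk' B).prodMap (QuotientGroup.mk' B)
  apply le_antisymm
  · rintro _ ⟨g, rfl⟩
    obtain ⟨y, p, ⟨q, hq, rfl⟩, hg⟩ := exists_eq_wreath_of_mem
      (E := (twistedDiagonal.comap π).map coePair)
      (by
        rintro _ ⟨q, hq, rfl⟩
        exact ⟨q.swap, swap_mem_twistedDiagonal hq, rfl⟩)
      ⟨(a, c), Subgroup.subset_closure (.inl (by simp [π, mk_c_eq_mk_d b_mem_B])), rfl⟩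
      ⟨(a, d), Subgroup.subset_closure (.inl rfl), rfl⟩
      ⟨(1, b), by simp [π, (QuotientGroup.eq_one_iff b).mpr b_mem_B]; exact one_mem _, rfl⟩
      (g : Γ).2
    obtain ⟨rfl, hq'⟩ := wreath_injective (hg.symm.trans (sections_spec g))
    rwa [← coePair_injective hq']
  · have hker : π.ker = B.prod B := by
      rw [MonoidHom.ker_prodMap, QuotientGroup.ker_mk']
    have hTD : twistedDiagonal ≤ sections.range.map π := by
      have hL := generator_pairs_mem_range_sections
      rw [twistedDiagonal, Subgroup.closure_le]
      rintro _ (rfl | rfl)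
      · exact ⟨(a, c), hL _ (by simp), by simp [π, mk_c_eq_mk_d b_mem_B]⟩
      · exact ⟨(c, a), hL _ (by simp), by simp [π, mk_c_eq_mk_d b_mem_B]⟩
    calc twistedDiagonal.comap π ≤ (sections.range.map π).comap π := Subgroup.comap_mono hTD
      _ = sections.range := by
        rw [Subgroup.comap_map_eq, hker, sup_eq_left.mpr prod_B_le_range_sections]

theorem card_quotient_B : Nat.card (Γ ⧸ B) = 8 := by
  rw [← Subgroup.index_eq_card, index_B]

theorem card_twistedDiagonal : Nat.card twistedDiagonal = 8 := by
  have hda : (d * a) ^ 4 = 1 := by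
    rw [show d * a = (a * d)⁻¹ by rw [mul_inv_rev, a_inv, d_inv], inv_pow, ad_pow_four, inv_one]
  apply le_antisymm
  · exact Subgroup.card_closure_pair_le (Prod.ext (mk_pow_eq_one a_sq) (mk_pow_eq_one d_sq))
      (Prod.ext (mk_pow_eq_one d_sq) (mk_pow_eq_one a_sq))
      (Prod.ext (mk_pow_eq_one ad_pow_four) (mk_pow_eq_one hda))
  · have : Finite (Γ ⧸ B) := Nat.finite_of_card_ne_zero (by rw [card_quotient_B]; norm_num)
    have hsurj : Function.Surjective ((MonoidHom.snd _ _).comp twistedDiagonal.subtype) := by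
      rw [← MonoidHom.range_eq_top, MonoidHom.range_comp, Subgroup.range_subtype,
        twistedDiagonal, MonoidHom.map_closure, ← closure_mk_a_d_eq_top b_mem_B]
      simp [Set.image_insert_eq, Set.pair_comm]
    exact card_quotient_B ▸ Nat.card_le_card_of_surjective _ hsurj

theorem index_range_sections : sections.range.index = 8 := by
  rw [range_sections_eq_comap, Subgroup.index_comap_of_surjective _
    (Prod.map_surjective.mpr ⟨QuotientGroup.mk'_surjective B, QuotientGroup.mk'_surjective B⟩)]
  have := twistedDiagonal.card_mul_index
  rw [card_twistedDiagonal, Nat.card_prod, card_quotient_B] at this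
  omega

theorem index_levelStab_succ_of_le_two {k : ℕ} (hk : k ≤ 2) :
    (levelStab (k + 1)).index = 2 * (levelStab k).index ^ 2 := by
  simpa [sup_prod_levelStab_eq_top hk] using index_levelStab_succ_mul k

theorem index_levelStab_succ_of_three_le {k : ℕ} (hk : 3 ≤ k) :
    (levelStab (k + 1)).index * 8 = 2 * (levelStab k).index ^ 2 := by
  rw [← index_range_sections, ← sup_eq_left.mpr ((Subgroup.prod_mono (levelStab_le_B hk)
    (levelStab_le_B hk)).trans prod_B_le_range_sections)]
  exact index_levelStab_succ_mul k

theorem index_levelStab {k : ℕ} (hk : 3 ≤ k) :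
    (levelStab k).index = 2 ^ (5 * 2 ^ (k - 3) + 2) := by
  induction k, hk using Nat.le_induction with
  | base =>
    rw [index_levelStab_succ_of_le_two le_rfl, index_levelStab_succ_of_le_two (by norm_num),
      index_levelStab_succ_of_le_two (by norm_num), levelStab_zero, Subgroup.index_top]
    rfl
  | succ k hk ih =>
    have h := index_levelStab_succ_of_three_le hk
    rw [ih] at h
    refine Nat.eq_of_mul_eq_mul_right (by norm_num : 0 < 8) (h.trans ?_)
    rw [show k + 1 - 3 = k - 3 + 1 by omega, ← pow_mul, ← pow_succ', pow_succ 2 (k - 3),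
      show (8 : ℕ) = 2 ^ 3 from rfl, ← pow_add]
    ring_nf

end Grigorchuk

/-- The congruence quotient `Γ_k` of the first Grigorchuk group — realized as the set of
restrictions of elements of `Γ` to the first `k` levels of the tree — has cardinality
`2 ^ (5 · 2 ^ (k - 3) + 2)` for every `k ≥ 3`. -/
theorem grig_stmt15 (k : ℕ) (hk : 3 ≤ k) :
    Nat.card (Set.range (fun (g : Grigorchuk) =>
        (fun l : {l : List Bool // l.length ≤ k} =>
          ((g : Equiv.Perm (List Bool)) l.1 : List Bool))))
      = 2 ^ (5 * 2 ^ (k - 3) + 2) := by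
  rw [Grigorchuk.card_range_restrict, Grigorchuk.index_levelStab hk]
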